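/- Let F_q be a finite field, m ≥ 1, R = F_q[X]/(X^m − 1), and let A ∈ R^{s×l} (s ≤ l) be unit by columns. Fix pairwise distinct indices i_1,…,i_s ∈ {1,…,l} and let A^{(1)} = A, A^{(2)}, …, A^{(s)} be the matrices produced by the elimination recursion with respect to i_1,…,i_s (dividing by the pivots). Then for every k ∈ {1,…,s}, the pivot entry a^{(k)}_{k,i_k} is a unit of R; in particular all divisions in the recursion are well defined. -/
import Mathlib


/-- The ring `R = F[X]/(X^m − 1)`. -/
abbrev Rq (F : Type*) [Field F] (m : ℕ) : Type _ :=
  Polynomial F ⧸ Ideal.span ({Polynomial.X ^ m - 1} : Set (Polynomial F))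

/-- `A` is unit by columns: for every `1 ≤ t ≤ s` and every choice of columns
`j_1 < ⋯ < j_t`, the determinant of the `t×t` submatrix of the first `t` rows and those
columns is a unit of `R`.  (For `t = 0` the condition holds trivially.) -/
def unitByColumns {F : Type*} [Field F] {m s l : ℕ}
    (A : Matrix (Fin s) (Fin l) (Rq F m)) : Prop :=
  ∀ (t : ℕ) (ht : t ≤ s) (j : Fin t → Fin l), StrictMono j →
    IsUnit (Matrix.of fun r c : Fin t => A (Fin.castLE ht r) (j c)).det

/-- The elimination recursion over `R = F[X]/(X^m − 1)` with respect to the pairwise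
distinct column indices `idx 0, …, idx (s-1)` (0-based; `elimSeqR A idx (k-1)` is the
matrix `A^{(k)}` of the paper), dividing by the pivots, i.e. multiplying by
`Ring.inverse` of the pivot (which is the genuine inverse whenever the pivot is a
unit). -/
noncomputable def elimSeqR {F : Type*} [Field F] {m s l : ℕ}
    (A : Matrix (Fin s) (Fin l) (Rq F m)) (idx : Fin s → Fin l) :
    ℕ → Matrix (Fin s) (Fin l) (Rq F m)
  | 0 => A
  | (k + 1) =>
      if hk : k < s then
        let B := elimSeqR A idx k
        Matrix.of fun r i =>
          if ∃ j : Fin s, j.1 ≤ k ∧ idx j = i then B r i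
          else B r i -
            B ⟨k, hk⟩ i * Ring.inverse (B ⟨k, hk⟩ (idx ⟨k, hk⟩)) * B r (idx ⟨k, hk⟩)
      else elimSeqR A idx k

section Aux

variable {F : Type*} [Field F] {m s l : ℕ}
variable (A : Matrix (Fin s) (Fin l) (Rq F m)) (idx : Fin s → Fin l)

/-- Columns `idx t` are unchanged by all elimination steps from step `t.1` on. -/
lemma elimSeqR_col_fixed (t : Fin s) :
    ∀ n, t.1 ≤ n → ∀ r : Fin s,
      elimSeqR A idx n r (idx t) = elimSeqR A idx t.1 r (idx t) := by
  intro n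
  induction n with
  | zero =>
    intro h r
    rw [Nat.le_zero.mp h]
  | succ n ih =>
    intro h r
    rcases Nat.lt_or_ge t.1 (n + 1) with h' | h'
    · have ht : t.1 ≤ n := Nat.lt_succ_iff.mp h'
      rw [elimSeqR]
      by_cases hk : n < s
      · rw [dif_pos hk]
        simp only [Matrix.of_apply]
        rw [if_pos ⟨t, ht, rfl⟩]
        exact ih ht r
      · rw [dif_neg hk]
        exact ih ht r
    · have : t.1 = n + 1 := le_antisymm h h'
      rw [this]

/-- Once the pivot of row `r` is a unit, after step `r.1` the row `r` vanishes on every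
column not of the form `idx j`, `j ≤ r`. -/
lemma elimSeqR_row_zero (hinj : Function.Injective idx) (r : Fin s)
    (hr : IsUnit (elimSeqR A idx r.1 r (idx r))) :
    ∀ n, r.1 + 1 ≤ n → ∀ i : Fin l, (∀ j : Fin s, j.1 ≤ r.1 → idx j ≠ i) →
      elimSeqR A idx n r i = 0 := by
  intro n hn
  induction n, hn using Nat.le_induction with
  | base =>
    intro i hi
    rw [elimSeqR, dif_pos r.isLt]
    simp only [Matrix.of_apply]
    rw [if_neg (by rintro ⟨j, hj, rfl⟩; exact hi j hj rfl)]
    have hre : (⟨r.1, r.isLt⟩ : Fin s) = r := rfl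
    rw [hre, mul_assoc, Ring.inverse_mul_cancel _ hr, mul_one, sub_self]
  | succ n hn ih =>
    intro i hi
    rw [elimSeqR]
    by_cases hk : n < s
    · rw [dif_pos hk]
      simp only [Matrix.of_apply]
      split_ifs with hcond
      · exact ih i hi
      · have h1 : elimSeqR A idx n r i = 0 := ih i hi
        have h2 : elimSeqR A idx n r (idx ⟨n, hk⟩) = 0 := by
          refine ih _ fun j hj heq => ?_
          have hjv : j.1 = n := congrArg Fin.val (hinj heq)
          omega
        rw [h1, h2, mul_zero, sub_zero]
    · rw [dif_neg hk]
      exact ih i hi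

/-- The determinant of the submatrix of the first `t` rows and columns `idx 0, …, idx (t-1)`
is unchanged by the elimination steps. -/
lemma elimSeqR_det (hinj : Function.Injective idx) (t : ℕ) (ht : t ≤ s) (n : ℕ) :
    (Matrix.of fun a b : Fin t =>
        elimSeqR A idx n (Fin.castLE ht a) (idx (Fin.castLE ht b))).det
      = (Matrix.of fun a b : Fin t => A (Fin.castLE ht a) (idx (Fin.castLE ht b))).det := by
  induction n with
  | zero => rfl
  | succ n ih =>
    rw [← ih]
    by_cases hk : n < s
    · by_cases hnt : n < t
      · -- a genuine column operation inside the submatrix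
        set M : Matrix (Fin t) (Fin t) (Rq F m) :=
          Matrix.of fun a b : Fin t =>
            elimSeqR A idx n (Fin.castLE ht a) (idx (Fin.castLE ht b)) with hM
        set N : Matrix (Fin t) (Fin t) (Rq F m) :=
          Matrix.of fun a b : Fin t =>
            elimSeqR A idx (n + 1) (Fin.castLE ht a) (idx (Fin.castLE ht b)) with hN
        have hkey : ∀ a b : Fin t,
            N a b = M a b +
              (if b.1 ≤ n then 0 else -(M ⟨n, hnt⟩ b * Ring.inverse (M ⟨n, hnt⟩ ⟨n, hnt⟩)))
                * M a ⟨n, hnt⟩ := by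
          intro a b
          have hcast : (Fin.castLE ht ⟨n, hnt⟩ : Fin s) = ⟨n, hk⟩ := rfl
          simp only [hN, hM, Matrix.of_apply]
          rw [elimSeqR, dif_pos hk]
          simp only [Matrix.of_apply]
          by_cases hb : b.1 ≤ n
          · rw [if_pos ⟨Fin.castLE ht b, hb, rfl⟩, if_pos hb, hcast]
            ring
          · rw [if_neg ?_, if_neg hb, hcast]
            · ring
            · rintro ⟨j, hj, heq⟩
              have : j.1 = b.1 := congrArg Fin.val (hinj heq)
              omega
        rw [← Matrix.det_transpose N, ← Matrix.det_transpose M]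
        exact Matrix.det_eq_of_forall_row_eq_smul_add_const
          (fun b => if b.1 ≤ n then 0 else
            -(M ⟨n, hnt⟩ b * Ring.inverse (M ⟨n, hnt⟩ ⟨n, hnt⟩)))
          ⟨n, hnt⟩ (by simp) (fun i j => hkey j i)
      · -- every column of the submatrix is fixed by this step
        congr 1
        ext a b
        have hb : b.1 ≤ n := by omega
        simp only [Matrix.of_apply]
        rw [elimSeqR, dif_pos hk]
        simp only [Matrix.of_apply]
        rw [if_pos ⟨Fin.castLE ht b, hb, rfl⟩]
    · congr 1
      ext a b
      simp only [Matrix.of_apply]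
      rw [elimSeqR, dif_neg hk]

/-- From `unitByColumns`: the determinant of the first-`t`-rows submatrix with any family of
distinct columns is a unit (sorting the columns only changes the sign). -/
lemma isUnit_det_of_injective (hA : unitByColumns A) (t : ℕ) (ht : t ≤ s)
    (f : Fin t → Fin l) (hf : Function.Injective f) :
    IsUnit (Matrix.of fun a b : Fin t => A (Fin.castLE ht a) (f b)).det := by
  classical
  set S : Finset (Fin l) := Finset.univ.image f with hS
  have hcard : S.card = t := by
    rw [hS, Finset.card_image_of_injective _ hf, Finset.card_univ, Fintype.card_fin]
  set e := S.orderIsoOfFin hcard with he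
  set j : Fin t → Fin l := fun b => (e b : Fin l) with hj
  have hjmono : StrictMono j := fun a b hab => by
    simpa [hj] using (Subtype.coe_lt_coe.mpr (e.strictMono hab))
  have hmem : ∀ b, f b ∈ S := fun b => Finset.mem_image_of_mem f (Finset.mem_univ b)
  set σ : Fin t → Fin t := fun b => e.symm ⟨f b, hmem b⟩ with hσ
  have hσinj : Function.Injective σ := by
    intro a b hab
    apply hf
    have := congrArg (fun x => ((e x : S) : Fin l)) hab
    simpa [hσ] using this
  let σe : Equiv.Perm (Fin t) := Equiv.ofBijective σ (Finite.injective_iff_bijective.mp hσinj)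
  have hfj : ∀ b, f b = j (σe b) := by
    intro b
    simp [σe, hj, hσ, Equiv.ofBijective]
  have h1 : (Matrix.of fun a b : Fin t => A (Fin.castLE ht a) (f b)) =
      (Matrix.of fun a b : Fin t => A (Fin.castLE ht a) (j b)).submatrix id σe := by
    ext a b
    simp [Matrix.submatrix_apply, hfj b]
  rw [h1, Matrix.det_permute']
  have hunit := hA t ht j hjmono
  rcases Int.units_eq_one_or (Equiv.Perm.sign σe) with hsg | hsg <;> rw [hsg]
  · simpa using hunit
  · have : (((-1 : ℤˣ) : ℤ) : Rq F m) = -1 := by push_cast; ring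
    rw [this]
    exact isUnit_one.neg.mul hunit

end Aux

/-- If `A ∈ R^{s×l}` is unit by columns then every pivot
`a^{(k)}_{k,i_k}` appearing in the elimination recursion is a unit of
`R = F[X]/(X^m − 1)`, so all divisions in the recursion are well defined. -/
theorem statement5 (F : Type*) [Field F] [Fintype F] (m : ℕ) (hm : 1 ≤ m)
    (s l : ℕ) (hs : 1 ≤ s) (hsl : s ≤ l)
    (A : Matrix (Fin s) (Fin l) (Rq F m)) (hA : unitByColumns A)
    (idx : Fin s → Fin l) (hinj : Function.Injective idx) :
    ∀ k : Fin s, IsUnit (elimSeqR A idx k.1 k (idx k)) := by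
  have main : ∀ N : ℕ, ∀ k : Fin s, k.1 < N → IsUnit (elimSeqR A idx k.1 k (idx k)) := by
    intro N
    induction N with
    | zero => exact fun k h => absurd h (Nat.not_lt_zero _)
    | succ N ihN =>
      intro k hkN
      by_cases hlt : k.1 < N
      · exact ihN k hlt
      have IH : ∀ j : Fin s, j < k → IsUnit (elimSeqR A idx j.1 j (idx j)) :=
        fun j hj => ihN j (by omega)
      -- the (k.1+1) × (k.1+1) submatrix after k.1 elimination steps
      set t : ℕ := k.1 + 1 with hts
      have ht : t ≤ s := k.isLt
      set T : Matrix (Fin t) (Fin t) (Rq F m) :=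
        Matrix.of fun a b : Fin t =>
          elimSeqR A idx k.1 (Fin.castLE ht a) (idx (Fin.castLE ht b)) with hT
      -- T is lower triangular
      have h_tri : ∀ a b : Fin t, a < b → T a b = 0 := by
        intro a b hab
        have hak : a.1 < k.1 := by
          have hb := b.isLt
          have := (Fin.lt_iff_val_lt_val.mp hab)
          omega
        have hrk : (Fin.castLE ht a : Fin s) < k := by
          rw [Fin.lt_iff_val_lt_val]; exact hak
        refine elimSeqR_row_zero A idx hinj (Fin.castLE ht a) (IH _ hrk) k.1 (by
          simpa using hak) _ ?_
        intro j hj heq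
        have : j = Fin.castLE ht b := hinj heq
        have hjv : j.1 = b.1 := congrArg Fin.val this
        have := Fin.lt_iff_val_lt_val.mp hab
        simp only [Fin.coe_castLE] at hj
        omega
      have h_det_tri : T.det = ∏ a : Fin t, T a a := by
        refine Matrix.det_of_lowerTriangular T ?_
        intro i j hij
        exact h_tri i j hij
      -- T has the same determinant as the corresponding submatrix of A, which is a unit
      have h_unit : IsUnit T.det := by
        rw [hT, elimSeqR_det A idx hinj t ht k.1]
        exact isUnit_det_of_injective A hA t ht (fun b => idx (Fin.castLE ht b))
          (fun a b hab => Fin.castLE_injective ht (hinj hab))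
      rw [h_det_tri, Fin.prod_univ_castSucc] at h_unit
      have hlast : T (Fin.last k.1) (Fin.last k.1) = elimSeqR A idx k.1 k (idx k) := by
        have : (Fin.castLE ht (Fin.last k.1) : Fin s) = k := by
          apply Fin.ext; simp
        rw [hT]; simp only [Matrix.of_apply, this]
      rw [hlast] at h_unit
      exact isUnit_of_mul_isUnit_right h_unit
  exact fun k => main (k.1 + 1) k (Nat.lt_succ_self _)
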